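/- Let Ω be a domain in ℂ and let X ⊆ 𝒪(Ω) be an algebra containing 1 with X' = X (i.e., {f' : f ∈ X} = X). Fix n ≥ 1. Then a set E ⊆ Ω is the zero set of the Wronskian W(f₀,…,fₙ) of some linearly independent f₀,…,fₙ ∈ X if and only if E is the zero set of some non-identically-zero function g ∈ X. -/

import Mathlib

/-!
If the Wronskian of analytic functions f₀, …, fₘ vanishes on a connected open set but that of
f₀, …, fₘ₋₁ does not vanish at some point, then near that point Cramer's rule writes fₘ as a
combination of the others whose coefficients have zero derivative (differentiate the rows of the
Wronskian system), so they are constant, and the identity theorem spreads the relation over the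
whole domain. By induction, independent functions have a Wronskian that is not identically zero;
it lies in `X` because it is a polynomial in derivatives of the fⱼ.

Conversely, if `g = f'`, the k-th derivative of `φ ∘ f` is a lower triangular combination of the
`φ⁽ᵐ⁾ ∘ f` with diagonal coefficients `(f')ᵏ`, so `W(φ₀ ∘ f, …, φₙ ∘ f) = (f')^{n(n+1)/2} W(φ) ∘ f`.
For `φⱼ = tʲ` this gives `W(1, f, …, fⁿ) = g^{n(n+1)/2} ∏ j!`, which vanishes exactly where `g`
does (as `n ≥ 1`), and is nonzero somewhere, forcing `1, f, …, fⁿ` to be independent.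
-/

open Complex Set Matrix Filter Topology

theorem Matrix.apply_last_eq_sum_of_det_eq_zero {K : Type*} [Field K] {m : ℕ}
    {M : Matrix (Fin (m + 1)) (Fin (m + 1)) K} (hM : M.det = 0)
    (hA : (M.submatrix Fin.castSucc Fin.castSucc).det ≠ 0) {c : Fin m → K}
    (hc : M.submatrix Fin.castSucc Fin.castSucc *ᵥ c = fun i => M i.castSucc (Fin.last m))
    (k : Fin (m + 1)) : M k (Fin.last m) = ∑ j, c j * M k j.castSucc := by
  obtain ⟨d, hd0, hMd⟩ := exists_mulVec_eq_zero_iff.mpr hM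
  have hrow (k : Fin (m + 1)) :
      ∑ j : Fin m, M k j.castSucc * d j.castSucc + M k (Fin.last m) * d (Fin.last m) = 0 := by
    simpa [mulVec, dotProduct, Fin.sum_univ_castSucc] using congrFun hMd k
  have hlast : d (Fin.last m) ≠ 0 := by
    intro h
    have : (fun j : Fin m => d j.castSucc) = 0 :=
      eq_zero_of_mulVec_eq_zero hA
        (funext fun i => by simpa [h, mulVec, dotProduct] using hrow i.castSucc)
    exact hd0 (funext fun j => Fin.lastCases (by simpa using h) (fun i => congrFun this i) j)
  have hcd : c = -(d (Fin.last m))⁻¹ • fun j => d j.castSucc := by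
    rw [← sub_eq_zero]
    refine eq_zero_of_mulVec_eq_zero hA ?_
    rw [mulVec_sub, hc, mulVec_smul]
    funext i
    have := hrow i.castSucc
    simp only [mulVec, dotProduct, submatrix_apply, Pi.sub_apply, Pi.smul_apply, smul_eq_mul,
      Pi.zero_apply]
    field_simp
    linear_combination this
  have hsum : ∑ j, c j * M k j.castSucc =
      -(d (Fin.last m))⁻¹ * ∑ j : Fin m, M k j.castSucc * d j.castSucc := by
    rw [hcd, Finset.mul_sum]
    exact Finset.sum_congr rfl fun j _ => by simp only [Pi.smul_apply, smul_eq_mul]; ring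
  rw [hsum]
  field_simp
  linear_combination hrow k

theorem differentiableAt_det {𝕜 ι : Type*} [NontriviallyNormedField 𝕜] [Fintype ι]
    [DecidableEq ι] {M : 𝕜 → Matrix ι ι 𝕜} {z : 𝕜}
    (hM : ∀ i j, DifferentiableAt 𝕜 (fun w => M w i j) z) :
    DifferentiableAt 𝕜 (fun w => (M w).det) z := by
  simp only [det_apply]
  fun_prop

theorem AnalyticOnNhd.differentiableAt_iteratedDeriv {f : ℂ → ℂ} {U : Set ℂ}
    (hf : AnalyticOnNhd ℂ f U) (k : ℕ) {z : ℂ} (hz : z ∈ U) :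
    DifferentiableAt ℂ (iteratedDeriv k f) z := by
  rw [iteratedDeriv_eq_iterate]
  exact (hf.iterated_deriv k z hz).differentiableAt

noncomputable def wronskianMatrix {n : ℕ} (f : Fin n → ℂ → ℂ) (z : ℂ) : Matrix (Fin n) (Fin n) ℂ :=
  Matrix.of fun k j => iteratedDeriv k (f j) z

noncomputable def wronskian {n : ℕ} (f : Fin n → ℂ → ℂ) (z : ℂ) : ℂ := (wronskianMatrix f z).det

theorem differentiableAt_wronskian {U : Set ℂ} {n : ℕ} {f : Fin n → ℂ → ℂ}
    (hf : ∀ j, AnalyticOnNhd ℂ (f j) U) {z : ℂ} (hz : z ∈ U) :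
    DifferentiableAt ℂ (wronskian f) z :=
  differentiableAt_det fun k j => (hf j).differentiableAt_iteratedDeriv k hz

theorem wronskian_mem {S : Subring (ℂ → ℂ)} (hS : ∀ f ∈ S, deriv f ∈ S) {n : ℕ}
    {f : Fin n → ℂ → ℂ} (hf : ∀ j, f j ∈ S) : wronskian f ∈ S := by
  have hiter (k : ℕ) (j : Fin n) : iteratedDeriv k (f j) ∈ S := by
    induction k with
    | zero => simpa using hf j
    | succ k ih => simpa [iteratedDeriv_succ] using hS _ ih
  let M : Matrix (Fin n) (Fin n) S := of fun k j => ⟨iteratedDeriv k (f j), hiter k j⟩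
  convert M.det.2 using 1
  funext z
  rw [wronskian, ← S.coe_subtype, RingHom.map_det]
  exact (RingHom.map_det (Pi.evalRingHom (fun _ : ℂ => ℂ) z : (ℂ → ℂ) →+* ℂ)
    (S.subtype.mapMatrix M)).symm

theorem deriv_eq_zero_of_iteratedDeriv_eq_sum {U : Set ℂ} (hU : IsOpen U) {m : ℕ}
    {g : Fin m → ℂ → ℂ} {h : ℂ → ℂ} {c : ℂ → Fin m → ℂ}
    (hg : ∀ j, AnalyticOnNhd ℂ (g j) U)
    (hc : ∀ j, ∀ z ∈ U, DifferentiableAt ℂ (fun w => c w j) z)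
    (hrel : ∀ z ∈ U, ∀ k : Fin (m + 1),
      iteratedDeriv k h z = ∑ j, c z j * iteratedDeriv k (g j) z)
    {z : ℂ} (hz : z ∈ U) (hW : wronskian g z ≠ 0) :
    (fun j => deriv (fun w => c w j) z) = 0 := by
  -- Differentiating row `k` of `hrel` and subtracting row `k + 1` leaves row `k` of `W(g) c' = 0`.
  refine eq_zero_of_mulVec_eq_zero hW (funext fun k => ?_)
  have hdiff (j) : DifferentiableAt ℂ (fun w => c w j * iteratedDeriv k (g j) w) z :=
    (hc j z hz).mul ((hg j).differentiableAt_iteratedDeriv k hz)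
  have hderiv : iteratedDeriv (k + 1) h z =
      ∑ j, (deriv (fun w => c w j) z * iteratedDeriv k (g j) z
        + c z j * iteratedDeriv (k + 1) (g j) z) := by
    have hEq : iteratedDeriv k h =ᶠ[𝓝 z] fun w => ∑ j, c w j * iteratedDeriv k (g j) w := by
      filter_upwards [hU.mem_nhds hz] with w hw using hrel w hw k.castSucc
    rw [iteratedDeriv_succ, hEq.deriv_eq, deriv_fun_sum fun j _ => hdiff j]
    refine Finset.sum_congr rfl fun j _ => ?_
    rw [deriv_fun_mul (hc j z hz) ((hg j).differentiableAt_iteratedDeriv k hz), iteratedDeriv_succ]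
  have hnext := hrel z hz k.succ
  rw [Fin.val_succ, hderiv, Finset.sum_add_distrib] at hnext
  simp only [mulVec, dotProduct, wronskianMatrix, of_apply, Pi.zero_apply,
    mul_comm (iteratedDeriv k (g _) z)]
  linear_combination hnext

theorem exists_eqOn_sum_of_wronskian_eq_zero {U : Set ℂ} (hU : IsOpen U) (hU' : IsPreconnected U)
    {m : ℕ} {f : Fin (m + 1) → ℂ → ℂ} (hf : ∀ j, AnalyticOnNhd ℂ (f j) U)
    (hW : ∀ z ∈ U, wronskian f z = 0)
    (hW' : ∀ z ∈ U, wronskian (fun j : Fin m => f j.castSucc) z ≠ 0) :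
    ∃ a : Fin m → ℂ, EqOn (f (Fin.last m)) (fun z => ∑ j, a j * f j.castSucc z) U := by
  set A := wronskianMatrix fun j : Fin m => f j.castSucc
  set v : ℂ → Fin m → ℂ := fun z i => iteratedDeriv i (f (Fin.last m)) z
  -- `c z` solves the first `m` rows; Cramer's formula shows that it is differentiable in `z`.
  set c : ℂ → Fin m → ℂ := fun z => (A z).det⁻¹ • (A z).cramer (v z)
  have hAc : ∀ z ∈ U, A z *ᵥ c z = v z := fun z hz => by
    rw [mulVec_smul, mulVec_cramer, smul_smul, inv_mul_cancel₀ (a := (A z).det) (hW' z hz),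
      one_smul]
  have hrel : ∀ z ∈ U, ∀ k : Fin (m + 1),
      iteratedDeriv k (f (Fin.last m)) z = ∑ j, c z j * iteratedDeriv k (f j.castSucc) z :=
    fun z hz => apply_last_eq_sum_of_det_eq_zero (hW z hz) (hW' z hz) (hAc z hz)
  have hc : ∀ j, ∀ z ∈ U, DifferentiableAt ℂ (fun w => c w j) z := by
    intro j z hz
    simp only [c, Pi.smul_apply, smul_eq_mul, cramer_apply]
    have hentries (k i : Fin m) : DifferentiableAt ℂ (fun w => A w k i) z :=
      (hf i.castSucc).differentiableAt_iteratedDeriv k hz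
    refine ((differentiableAt_det hentries).inv (hW' z hz)).mul (differentiableAt_det fun k i => ?_)
    simp only [updateCol_apply]
    split_ifs
    · exact (hf _).differentiableAt_iteratedDeriv k hz
    · exact hentries k i
  have hc' : ∀ z ∈ U, (fun j => deriv (fun w => c w j) z) = 0 := fun z hz =>
    deriv_eq_zero_of_iteratedDeriv_eq_sum hU (fun j => hf j.castSucc) hc hrel hz (hW' z hz)
  choose a ha using fun j => hU.exists_is_const_of_deriv_eq_zero hU'
    (fun z hz => (hc j z hz).differentiableWithinAt) fun z hz => congrFun (hc' z hz) j
  refine ⟨a, fun z hz => ?_⟩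
  simpa [ha _ z hz] using hrel z hz 0

theorem exists_sum_eq_zero_of_wronskian_eq_zero {Ω : Set ℂ} (hΩ : IsOpen Ω)
    (hΩ' : IsPreconnected Ω) {n : ℕ} {f : Fin (n + 1) → ℂ → ℂ}
    (hf : ∀ j, AnalyticOnNhd ℂ (f j) Ω) (hW : ∀ z ∈ Ω, wronskian f z = 0) :
    ∃ c : Fin (n + 1) → ℂ, c ≠ 0 ∧ ∀ z ∈ Ω, ∑ j, c j * f j z = 0 := by
  induction n with
  | zero =>
    refine ⟨1, one_ne_zero, fun z hz => ?_⟩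
    simpa [wronskian, wronskianMatrix] using hW z hz
  | succ n ih =>
    by_cases hW' : ∀ z ∈ Ω, wronskian (fun j : Fin (n + 1) => f j.castSucc) z = 0
    · obtain ⟨c, hc, hcf⟩ := ih (fun j => hf j.castSucc) hW'
      refine ⟨Fin.snoc c 0, fun h => hc ?_, fun z hz => ?_⟩
      · exact funext fun j => by simpa using congrFun h j.castSucc
      · simpa [Fin.sum_univ_castSucc] using hcf z hz
    push Not at hW'
    obtain ⟨z₀, hz₀, hWz₀⟩ := hW'
    obtain ⟨ε, hε, hball⟩ := Metric.mem_nhds_iff.mp <| inter_mem (hΩ.mem_nhds hz₀)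
      ((differentiableAt_wronskian (fun j => hf j.castSucc) hz₀).continuousAt.eventually_ne hWz₀)
    obtain ⟨a, ha⟩ := exists_eqOn_sum_of_wronskian_eq_zero Metric.isOpen_ball
      (convex_ball z₀ ε).isPreconnected (fun j => (hf j).mono fun z hz => (hball hz).1)
      (fun z hz => hW z (hball hz).1) fun z hz => (hball hz).2
    have hsum : AnalyticOnNhd ℂ (fun z => ∑ j, a j * f j.castSucc z) Ω :=
      Finset.analyticOnNhd_fun_sum _ fun j _ => analyticOnNhd_const.mul (hf j.castSucc)
    have hΩa := (hf (Fin.last _)).eqOn_of_preconnected_of_eventuallyEq hsum hΩ' hz₀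
      (Filter.eventually_of_mem (Metric.ball_mem_nhds z₀ hε) ha)
    refine ⟨Fin.snoc (-a) 1, fun h => ?_, fun z hz => ?_⟩
    · simpa using congrFun h (Fin.last _)
    · simp [Fin.sum_univ_castSucc, hΩa hz]

theorem eq_zero_of_wronskian_ne_zero {Ω : Set ℂ} (hΩ : IsOpen Ω) {n : ℕ} {f : Fin n → ℂ → ℂ}
    (hf : ∀ j, AnalyticOnNhd ℂ (f j) Ω) {z₀ : ℂ} (hz₀ : z₀ ∈ Ω) (hW : wronskian f z₀ ≠ 0)
    {c : Fin n → ℂ} (hc : ∀ z ∈ Ω, ∑ j, c j * f j z = 0) : c = 0 := by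
  refine eq_zero_of_mulVec_eq_zero hW (funext fun k => ?_)
  have hzero : (fun z => ∑ j, c j * f j z) =ᶠ[𝓝 z₀] 0 :=
    eventually_of_mem (hΩ.mem_nhds hz₀) hc
  have := hzero.iteratedDeriv_eq k
  rw [iteratedDeriv_fun_sum (f := fun j z => c j * f j z)
    fun j _ => (analyticAt_const.mul (hf j z₀ hz₀)).contDiffAt] at this
  simpa [mulVec, dotProduct, wronskianMatrix, mul_comm] using this

/-- `bellCoeff f k m` is the coefficient of `φ⁽ᵐ⁾ ∘ f` in `(φ ∘ f)⁽ᵏ⁾`: the partial Bell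
polynomial `B_{k,m}(f', f'', …)`. -/
noncomputable def bellCoeff (f : ℂ → ℂ) : ℕ → ℕ → ℂ → ℂ
  | 0, 0 => 1
  | 0, _ + 1 => 0
  | k + 1, 0 => deriv (bellCoeff f k 0)
  | k + 1, m + 1 => deriv (bellCoeff f k (m + 1)) + deriv f * bellCoeff f k m

theorem bellCoeff_eq_zero_of_lt (f : ℂ → ℂ) {k m : ℕ} (h : k < m) : bellCoeff f k m = 0 := by
  induction k generalizing m with
  | zero => obtain ⟨m, rfl⟩ := Nat.exists_eq_add_of_lt h; rfl
  | succ k ih =>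
    obtain ⟨m, rfl⟩ : ∃ m', m = m' + 1 := ⟨m - 1, by omega⟩
    rw [bellCoeff, ih (by omega), ih (by omega)]
    simp

theorem bellCoeff_self (f : ℂ → ℂ) (k : ℕ) : bellCoeff f k k = deriv f ^ k := by
  induction k with
  | zero => rfl
  | succ k ih => simp [bellCoeff, ih, bellCoeff_eq_zero_of_lt f k.lt_succ_self, pow_succ, mul_comm]

theorem AnalyticOnNhd.bellCoeff {f : ℂ → ℂ} {Ω : Set ℂ} (hf : AnalyticOnNhd ℂ f Ω) (k m : ℕ) :
    AnalyticOnNhd ℂ (bellCoeff f k m) Ω := by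
  induction k generalizing m with
  | zero => cases m <;> exact analyticOnNhd_const
  | succ k ih => cases m with
    | zero => exact (ih 0).deriv
    | succ m => exact (ih (m + 1)).deriv.add (hf.deriv.mul (ih m))

theorem iteratedDeriv_comp_eq_sum_bellCoeff {Ω : Set ℂ} (hΩ : IsOpen Ω) {f φ : ℂ → ℂ}
    (hf : AnalyticOnNhd ℂ f Ω) (hφ : Differentiable ℂ φ) (k : ℕ) {z : ℂ} (hz : z ∈ Ω) :
    iteratedDeriv k (φ ∘ f) z =
      ∑ m ∈ Finset.range (k + 1), bellCoeff f k m z * iteratedDeriv m φ (f z) := by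
  have hφ' (m : ℕ) (w : ℂ) : DifferentiableAt ℂ (iteratedDeriv m φ) w :=
    (analyticOnNhd_univ_iff_differentiable.mpr hφ).differentiableAt_iteratedDeriv m (mem_univ w)
  induction k generalizing z with
  | zero => simp [bellCoeff]
  | succ k ih =>
    have hfz : DifferentiableAt ℂ f z := (hf z hz).differentiableAt
    have hB (m : ℕ) : DifferentiableAt ℂ (bellCoeff f k m) z :=
      (hf.bellCoeff k m z hz).differentiableAt
    have hφf (m : ℕ) : DifferentiableAt ℂ (fun w => iteratedDeriv m φ (f w)) z :=
      (hφ' m (f z)).comp z hfz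
    have hEq : iteratedDeriv k (φ ∘ f) =ᶠ[𝓝 z]
        fun w => ∑ m ∈ Finset.range (k + 1), bellCoeff f k m w * iteratedDeriv m φ (f w) := by
      filter_upwards [hΩ.mem_nhds hz] with w hw using ih hw
    set P : ℕ → ℂ := fun m => deriv (bellCoeff f k m) z * iteratedDeriv m φ (f z)
    set Q : ℕ → ℂ := fun m => deriv f z * bellCoeff f k m z * iteratedDeriv (m + 1) φ (f z)
    have hterm (m : ℕ) :
        deriv (fun w => bellCoeff f k m w * iteratedDeriv m φ (f w)) z = P m + Q m := by
      rw [deriv_fun_mul (hB m) (hφf m)]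
      rw [show (fun w => iteratedDeriv m φ (f w)) = iteratedDeriv m φ ∘ f from rfl,
        deriv_comp z (hφ' m (f z)) hfz, ← iteratedDeriv_succ]
      ring
    have hPlast : P (k + 1) = 0 := by simp [P, bellCoeff_eq_zero_of_lt f k.lt_succ_self]
    rw [iteratedDeriv_succ, hEq.deriv_eq,
      deriv_fun_sum (A := fun m w => bellCoeff f k m w * iteratedDeriv m φ (f w))
        fun m _ => (hB m).mul (hφf m)]
    simp only [hterm, Finset.sum_add_distrib]
    rw [Finset.sum_range_succ' _ (k + 1)]
    simp only [bellCoeff, Pi.add_apply, Pi.mul_apply, add_mul, Finset.sum_add_distrib]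
    have hP : ∑ m ∈ Finset.range (k + 1), P (m + 1) + P 0 = ∑ m ∈ Finset.range (k + 1), P m := by
      rw [← Finset.sum_range_succ', Finset.sum_range_succ, hPlast, add_zero]
    change _ = ∑ m ∈ _, P (m + 1) + ∑ m ∈ _, Q m + P 0
    rw [← hP]
    ring

theorem wronskianMatrix_comp {Ω : Set ℂ} (hΩ : IsOpen Ω) {n : ℕ} {f : ℂ → ℂ} {φ : Fin n → ℂ → ℂ}
    (hf : AnalyticOnNhd ℂ f Ω) (hφ : ∀ j, Differentiable ℂ (φ j)) {z : ℂ} (hz : z ∈ Ω) :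
    wronskianMatrix (fun j => φ j ∘ f) z =
      Matrix.of (fun k m : Fin n => bellCoeff f k m z) * wronskianMatrix φ (f z) := by
  ext k j
  simp only [wronskianMatrix, mul_apply, of_apply]
  rw [Fin.sum_univ_eq_sum_range (fun m => bellCoeff f k m z * iteratedDeriv m (φ j) (f z)),
    iteratedDeriv_comp_eq_sum_bellCoeff hΩ hf (hφ j) k hz]
  refine Finset.sum_subset (Finset.range_subset_range.mpr k.isLt) fun m _ hm => ?_
  rw [bellCoeff_eq_zero_of_lt f (by simpa using hm), Pi.zero_apply, zero_mul]

theorem wronskian_comp {Ω : Set ℂ} (hΩ : IsOpen Ω) {n : ℕ} {f : ℂ → ℂ} {φ : Fin n → ℂ → ℂ}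
    (hf : AnalyticOnNhd ℂ f Ω) (hφ : ∀ j, Differentiable ℂ (φ j)) {z : ℂ} (hz : z ∈ Ω) :
    wronskian (fun j => φ j ∘ f) z = deriv f z ^ (∑ k : Fin n, (k : ℕ)) * wronskian φ (f z) := by
  rw [wronskian, wronskianMatrix_comp hΩ hf hφ hz, det_mul, wronskian,
    det_of_isLowerTriangular _ fun k m hkm => by
      simp [bellCoeff_eq_zero_of_lt f (show (k : ℕ) < m from hkm)]]
  simp [bellCoeff_self, Finset.prod_pow_eq_pow_sum]

theorem wronskian_monomials (n : ℕ) (t : ℂ) :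
    wronskian (fun j : Fin n => (· ^ (j : ℕ))) t = ∏ j : Fin n, ((j : ℕ).factorial : ℂ) := by
  rw [wronskian, det_of_isUpperTriangular fun k j hjk => by
      simp [wronskianMatrix, Nat.descFactorial_eq_zero_iff_lt.mpr (show (j : ℕ) < k from hjk)]]
  simp [wronskianMatrix, Nat.descFactorial_self]

theorem wronskian_pow {Ω : Set ℂ} (hΩ : IsOpen Ω) {f : ℂ → ℂ} (hf : AnalyticOnNhd ℂ f Ω) (n : ℕ)
    {z : ℂ} (hz : z ∈ Ω) :
    wronskian (fun j : Fin n => f ^ (j : ℕ)) z =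
      deriv f z ^ (∑ k : Fin n, (k : ℕ)) * ∏ j : Fin n, ((j : ℕ).factorial : ℂ) := by
  rw [← wronskian_monomials n (f z)]
  exact wronskian_comp hΩ hf (fun j => differentiable_id.pow _) hz

theorem wronskian_pow_eq_zero_iff {Ω : Set ℂ} (hΩ : IsOpen Ω) {f : ℂ → ℂ}
    (hf : AnalyticOnNhd ℂ f Ω) {n : ℕ} (hn : 1 ≤ n) {z : ℂ} (hz : z ∈ Ω) :
    wronskian (fun j : Fin (n + 1) => f ^ (j : ℕ)) z = 0 ↔ deriv f z = 0 := by
  have hexp : ∑ k : Fin (n + 1), (k : ℕ) ≠ 0 := fun h => by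
    simpa using Finset.sum_eq_zero_iff.mp h ⟨1, by omega⟩ (Finset.mem_univ _)
  have hfact : ∏ j : Fin (n + 1), ((j : ℕ).factorial : ℂ) ≠ 0 :=
    Finset.prod_ne_zero_iff.mpr fun j _ => Nat.cast_ne_zero.mpr (Nat.factorial_ne_zero _)
  rw [wronskian_pow hΩ hf _ hz, mul_eq_zero, or_iff_left hfact, pow_eq_zero_iff hexp]

theorem stmt_14 (Ω : Set ℂ) (hΩopen : IsOpen Ω) (hΩconn : IsConnected Ω)
    (X : Set (ℂ → ℂ))
    (hhol : ∀ f ∈ X, DifferentiableOn ℂ f Ω)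
    (hone : (fun _ : ℂ => (1 : ℂ)) ∈ X)
    (hadd : ∀ f ∈ X, ∀ g ∈ X, f + g ∈ X)
    (hsmul : ∀ (c : ℂ), ∀ f ∈ X, c • f ∈ X)
    (hmul : ∀ f ∈ X, ∀ g ∈ X, f * g ∈ X)
    (hderiv : ∀ f ∈ X, deriv f ∈ X)
    (hanti : ∀ g ∈ X, ∃ f ∈ X, Set.EqOn (deriv f) g Ω)
    (n : ℕ) (hn : 1 ≤ n) (E : Set ℂ) :
    (∃ f : Fin (n + 1) → ℂ → ℂ, (∀ j, f j ∈ X) ∧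
        (∀ c : Fin (n + 1) → ℂ, (∀ z ∈ Ω, ∑ j, c j * f j z = 0) → c = 0) ∧
        E = {z ∈ Ω |
          (Matrix.of fun k j : Fin (n + 1) => iteratedDeriv (k : ℕ) (f j) z).det = 0}) ↔
      (∃ g ∈ X, (∃ z ∈ Ω, g z ≠ 0) ∧ E = {z ∈ Ω | g z = 0}) := by
  let S : Subring (ℂ → ℂ) :=
    { carrier := X
      mul_mem' := fun {f g} hf hg => hmul f hf g hg
      one_mem' := hone
      add_mem' := fun {f g} hf hg => hadd f hf g hg
      zero_mem' := by simpa using hsmul 0 _ hone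
      neg_mem' := fun {f} hf => by simpa using hsmul (-1) f hf }
  have hX : ∀ f ∈ X, AnalyticOnNhd ℂ f Ω := fun f hf => (hhol f hf).analyticOnNhd hΩopen
  constructor
  · rintro ⟨f, hfX, hindep, rfl⟩
    refine ⟨wronskian f, wronskian_mem (S := S) hderiv hfX, ?_, rfl⟩
    by_contra! hW
    obtain ⟨c, hc, hcf⟩ := exists_sum_eq_zero_of_wronskian_eq_zero hΩopen hΩconn.isPreconnected
      (fun j => hX _ (hfX j)) hW
    exact hc (hindep c hcf)
  · rintro ⟨g, hgX, ⟨z₀, hz₀, hgz₀⟩, rfl⟩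
    obtain ⟨f, hfX, hfg⟩ := hanti g hgX
    have hW {z : ℂ} (hz : z ∈ Ω) : wronskian (fun j : Fin (n + 1) => f ^ (j : ℕ)) z = 0 ↔ g z = 0 :=
      hfg hz ▸ wronskian_pow_eq_zero_iff hΩopen (hX f hfX) hn hz
    refine ⟨fun j => f ^ (j : ℕ), fun j => pow_mem (S := S) hfX _, fun c hc => ?_,
      Set.ext fun z => and_congr_right fun hz => (hW hz).symm⟩
    exact eq_zero_of_wronskian_ne_zero hΩopen (fun j => hX _ (pow_mem (S := S) hfX _)) hz₀
      ((hW hz₀).not.mpr hgz₀) hc
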